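/- For b > 1 and x > 0, |I(b,x) - J₀(x/b)| ≤ ((2 - 4/π)/3) · x / b³, where I(b,x) = (2/π) ∫₀¹ cos(x arcsin(t/b))/√(1-t²) dt and J₀(y) = (2/π) ∫₀¹ cos(yt)/√(1-t²) dt. -/

import Mathlib

open Real MeasureTheory intervalIntegral Set

/-!
Since `|cos a - cos b| ≤ |a - b|`, the two integrands differ by at most
`x (arcsin (t/b) - t/b) / √(1 - t²)`. Substituting `u = s v` in
`arcsin s - s = ∫₀ˢ (1/√(1-u²) - 1) du` and using that `w ↦ (1/√(1-w) - 1)/w` is increasing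
gives `arcsin s - s ≤ (π/2 - 1) s³`, and `∫₀¹ t³/√(1-t²) dt = 2/3` then yields
the constant `(2/π)(π/2 - 1)(2/3) = (2 - 4/π)/3`.
-/

theorem intervalIntegrable_one_div_sqrt_one_sub_sq {a b : ℝ} (ha : a ∈ Icc (-1) 1)
    (hb : b ∈ Icc (-1) 1) :
    IntervalIntegrable (fun t => 1 / √(1 - t ^ 2)) volume a b := by
  refine intervalIntegrable_deriv_of_nonneg continuous_arcsin.continuousOn
    (fun t ht => hasDerivAt_arcsin ?_ ?_) (fun t _ => by positivity)
  · exact (lt_of_le_of_lt (le_min ha.1 hb.1) ht.1).ne'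
  · exact (lt_of_lt_of_le ht.2 (max_le ha.2 hb.2)).ne

theorem integral_one_div_sqrt_one_sub_sq {a b : ℝ} (ha : a ∈ Icc (-1) 1) (hb : b ∈ Icc (-1) 1) :
    ∫ t in a..b, 1 / √(1 - t ^ 2) = arcsin b - arcsin a := by
  refine integral_eq_sub_of_hasDeriv_right continuous_arcsin.continuousOn
    (fun t ht => (hasDerivAt_arcsin ?_ ?_).hasDerivWithinAt)
    (intervalIntegrable_one_div_sqrt_one_sub_sq ha hb)
  · exact (lt_of_le_of_lt (le_min ha.1 hb.1) ht.1).ne'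
  · exact (lt_of_lt_of_le ht.2 (max_le ha.2 hb.2)).ne

theorem intervalIntegrable_div_sqrt_one_sub_sq {g : ℝ → ℝ} {a b : ℝ} (ha : a ∈ Icc (-1) 1)
    (hb : b ∈ Icc (-1) 1) (hg : ContinuousOn g (uIcc a b)) :
    IntervalIntegrable (fun t => g t / √(1 - t ^ 2)) volume a b := by
  simpa only [mul_one_div] using
    (intervalIntegrable_one_div_sqrt_one_sub_sq ha hb).continuousOn_mul hg

theorem integral_pow_three_div_sqrt_one_sub_sq :
    ∫ t in (0 : ℝ)..1, t ^ 3 / √(1 - t ^ 2) = 2 / 3 := by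
  have hderiv : ∀ t ∈ Ioo (0 : ℝ) 1,
      HasDerivAt (fun t => -((t ^ 2 + 2) * √(1 - t ^ 2)) / 3) (t ^ 3 / √(1 - t ^ 2)) t := by
    intro t ht
    have hpos : 0 < 1 - t ^ 2 := by nlinarith [ht.1, ht.2]
    have hsq : √(1 - t ^ 2) ^ 2 = 1 - t ^ 2 := sq_sqrt hpos.le
    have hsqrt := ((hasDerivAt_pow 2 t).const_sub 1).sqrt hpos.ne'
    refine ((((hasDerivAt_pow 2 t).add_const 2).fun_mul hsqrt).fun_neg.div_const 3).congr_deriv ?_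
    field_simp
    linear_combination (-4 * t) * hsq
  rw [integral_eq_sub_of_hasDerivAt_of_le zero_le_one (by fun_prop) hderiv
    (intervalIntegrable_div_sqrt_one_sub_sq (by norm_num) (by norm_num) (by fun_prop))]
  norm_num

theorem one_div_sqrt_one_sub_sq_mul_sub_one_le {s v : ℝ} (hs0 : 0 ≤ s) (hs1 : s ≤ 1) (hv0 : 0 ≤ v)
    (hv1 : v < 1) :
    1 / √(1 - (s * v) ^ 2) - 1 ≤ s ^ 2 * (1 / √(1 - v ^ 2) - 1) := by
  set A := √(1 - v ^ 2)
  set B := √(1 - (s * v) ^ 2)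
  have hsv2 : (s * v) ^ 2 ≤ v ^ 2 := by
    rw [mul_pow]; exact mul_le_of_le_one_left (sq_nonneg v) (pow_le_one₀ hs0 hs1)
  have hApos : 0 < A := sqrt_pos.2 (by nlinarith)
  have hA2 : A ^ 2 = 1 - v ^ 2 := sq_sqrt (by nlinarith)
  have hB2 : B ^ 2 = 1 - (s * v) ^ 2 := sq_sqrt (by nlinarith)
  have hAB : A ≤ B := sqrt_le_sqrt (by linarith)
  have hBpos : 0 < B := hApos.trans_le hAB
  have hB : 1 / B - 1 = s ^ 2 * v ^ 2 / (B * (1 + B)) := by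
    field_simp
    linear_combination -hB2
  have hA : s ^ 2 * (1 / A - 1) = s ^ 2 * v ^ 2 / (A * (1 + A)) := by
    field_simp
    linear_combination -(s ^ 2) * hA2
  rw [hB, hA]
  gcongr

theorem arcsin_sub_self_le {s : ℝ} (hs0 : 0 ≤ s) (hs1 : s ≤ 1) :
    arcsin s - s ≤ (π / 2 - 1) * s ^ 3 := by
  rcases hs1.lt_or_eq with hs1 | rfl
  swap
  · simp [arcsin_one]
  rcases hs0.eq_or_lt with rfl | hs0
  · simp
  set φ : ℝ → ℝ := fun u => 1 / √(1 - u ^ 2) - 1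
  have hφ {a b : ℝ} (ha : a ∈ Icc (-1) 1) (hb : b ∈ Icc (-1) 1) :
      IntervalIntegrable φ volume a b :=
    (intervalIntegrable_one_div_sqrt_one_sub_sq ha hb).sub intervalIntegrable_const
  have hs : s ∈ Icc (-1 : ℝ) 1 := ⟨by linarith, hs1.le⟩
  have h0 : (0 : ℝ) ∈ Icc (-1 : ℝ) 1 := by norm_num
  have h1 : (1 : ℝ) ∈ Icc (-1 : ℝ) 1 := by norm_num
  have hFTC : arcsin s - s = s * ∫ v in (0 : ℝ)..1, φ (s * v) := by
    rw [← smul_eq_mul, smul_integral_comp_mul_left, mul_zero, mul_one,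
      integral_sub (intervalIntegrable_one_div_sqrt_one_sub_sq h0 hs) intervalIntegrable_const,
      integral_one_div_sqrt_one_sub_sq h0 hs, arcsin_zero]
    simp
  have hmono : ∫ v in (0 : ℝ)..1, φ (s * v) ≤ ∫ v in (0 : ℝ)..1, s ^ 2 * φ v := by
    refine integral_mono_on_of_le_Ioo zero_le_one ?_ ((hφ h0 h1).const_mul _)
      (fun v hv => one_div_sqrt_one_sub_sq_mul_sub_one_le hs0.le hs1.le hv.1.le hv.2)
    simpa [hs0.ne'] using (hφ h0 hs).comp_mul_left (c := s)
  have hval : ∫ v in (0 : ℝ)..1, s ^ 2 * φ v = s ^ 2 * (π / 2 - 1) := by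
    rw [intervalIntegral.integral_const_mul,
      integral_sub (intervalIntegrable_one_div_sqrt_one_sub_sq h0 h1) intervalIntegrable_const,
      integral_one_div_sqrt_one_sub_sq h0 h1, arcsin_one, arcsin_zero]
    simp
  calc arcsin s - s = s * ∫ v in (0 : ℝ)..1, φ (s * v) := hFTC
    _ ≤ s * (s ^ 2 * (π / 2 - 1)) := by gcongr; exact hmono.trans hval.le
    _ = (π / 2 - 1) * s ^ 3 := by ring

theorem self_le_arcsin {s : ℝ} (hs0 : 0 ≤ s) (hs1 : s ≤ 1) : s ≤ arcsin s :=
  calc s = sin (arcsin s) := (sin_arcsin (by linarith) hs1).symm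
    _ ≤ arcsin s := sin_le (arcsin_nonneg.2 hs0)

theorem abs_cos_mul_arcsin_sub_cos_mul_le {x s : ℝ} (hx : 0 ≤ x) (hs0 : 0 ≤ s) (hs1 : s ≤ 1) :
    |cos (x * arcsin s) - cos (x * s)| ≤ x * ((π / 2 - 1) * s ^ 3) :=
  calc |cos (x * arcsin s) - cos (x * s)| ≤ |x * arcsin s - x * s| := abs_cos_sub_cos_le _ _
    _ = x * (arcsin s - s) := by
      rw [← mul_sub, abs_mul, abs_of_nonneg hx,
        abs_of_nonneg (sub_nonneg.2 (self_le_arcsin hs0 hs1))]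
    _ ≤ x * ((π / 2 - 1) * s ^ 3) := by gcongr; exact arcsin_sub_self_le hs0 hs1

theorem I_sub_besselJ0_bound (b x : ℝ) (hb : 1 < b) (hx : 0 < x) :
    |((2 / π) * ∫ t in (0:ℝ)..1,
          Real.cos (x * Real.arcsin (t / b)) / Real.sqrt (1 - t ^ 2)) -
        ((2 / π) * ∫ t in (0:ℝ)..1,
          Real.cos ((x / b) * t) / Real.sqrt (1 - t ^ 2))| ≤
      ((2 - 4 / π) / 3) * x / b ^ 3 := by
  have hb0 : 0 < b := by linarith
  have hint {g : ℝ → ℝ} (hg : Continuous g) :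
      IntervalIntegrable (fun t => g t / √(1 - t ^ 2)) volume 0 1 :=
    intervalIntegrable_div_sqrt_one_sub_sq (by norm_num) (by norm_num) hg.continuousOn
  set c := x * (π / 2 - 1) / b ^ 3
  have hpointwise : ∀ t ∈ Icc (0 : ℝ) 1,
      |cos (x * arcsin (t / b)) / √(1 - t ^ 2) - cos (x / b * t) / √(1 - t ^ 2)|
        ≤ c * (t ^ 3 / √(1 - t ^ 2)) := by
    intro t ht
    have hs1 : t / b ≤ 1 := (div_le_one hb0).2 (by linarith [ht.2])
    have hcos := abs_cos_mul_arcsin_sub_cos_mul_le hx.le (div_nonneg ht.1 hb0.le) hs1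
    rw [← sub_div, abs_div, abs_of_nonneg (sqrt_nonneg _), ← mul_div_assoc,
      show x / b * t = x * (t / b) by ring]
    gcongr
    exact hcos.trans_eq (by simp only [c]; ring)
  rw [← mul_sub, ← integral_sub (hint (by fun_prop)) (hint (by fun_prop)), abs_mul,
    abs_of_pos (by positivity)]
  calc 2 / π * |∫ t in (0 : ℝ)..1, _|
      ≤ 2 / π * ∫ t in (0 : ℝ)..1, c * (t ^ 3 / √(1 - t ^ 2)) := by
        gcongr
        rw [← Real.norm_eq_abs]
        exact norm_integral_le_of_norm_le zero_le_one
          (.of_forall fun t ht => hpointwise t (Ioc_subset_Icc_self ht))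
          ((hint (g := (· ^ 3)) (by fun_prop)).const_mul c)
    _ = (2 - 4 / π) / 3 * x / b ^ 3 := by
        rw [intervalIntegral.integral_const_mul, integral_pow_three_div_sqrt_one_sub_sq]
        simp only [c]
        field_simp
        ring
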